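/- arXiv:1904.11730 — 3 statements merged into one kernel-verified Lean document; each statement's English description precedes it below -/
import Mathlib

section
/- With R = ℤ/pℤ[t,t⁻¹] (p > 1) and T⁻¹ = [[0,0,-1],[1,0,-1],[0,1,-1]]: if v ∈ R³ has v₀ ≠ 0 with ord(v₀) = n and ord(v₁), ord(v₂) ≥ n+2, then w = T⁻¹v satisfies ord(w₁) = n and ord(w₀), ord(w₂) ≥ n+2; that is, T⁻¹ maps X₁ into X₃. -/
open LaurentPolynomial

/-- lowest degree of `f` is at least `n` (ord 0 = +∞). -/
def ordGE {R : Type*} [CommRing R] (f : LaurentPolynomial R) (n : ℤ) : Prop :=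
  ∀ m : ℤ, m < n → f.coeff m = 0

/-- lowest degree of `f` is exactly `n`. -/
def ordEq {R : Type*} [CommRing R] (f : LaurentPolynomial R) (n : ℤ) : Prop :=
  f.coeff n ≠ 0 ∧ ordGE f n

/-- The matrix T⁻¹. -/
noncomputable def Ti (p : ℕ) : Matrix (Fin 3) (Fin 3) (LaurentPolynomial (ZMod p)) :=
  !![0, 0, -1; 1, 0, -1; 0, 1, -1]

section Order

variable {R : Type*} [CommRing R] {f g : LaurentPolynomial R} {m n : ℤ}

theorem ordGE.mono (hf : ordGE f n) (hmn : m ≤ n) : ordGE f m :=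
  fun k hk => hf k (hk.trans_le hmn)

theorem ordGE.neg (hf : ordGE f n) : ordGE (-f) n := by
  intro k hk
  simp [hf k hk]

theorem ordGE.sub (hf : ordGE f n) (hg : ordGE g n) : ordGE (f - g) n := by
  intro k hk
  simp [hf k hk, hg k hk]

theorem ordEq.sub_of_ordGE (hf : ordEq f n) (hg : ordGE g (n + 1)) : ordEq (f - g) n :=
  ⟨by simpa [hg n (lt_add_one n)] using hf.1, hf.2.sub (hg.mono (Int.le_add_one le_rfl))⟩

end Order

theorem Ti_mulVec (p : ℕ) (v : Fin 3 → LaurentPolynomial (ZMod p)) :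
    (Ti p).mulVec v = ![-v 2, v 0 - v 2, v 1 - v 2] := by
  ext i
  fin_cases i <;> simp [Ti, Matrix.mulVec, dotProduct, Fin.sum_univ_three] <;> ring

theorem Tinv_maps_X1_to_X3_general (p : ℕ)
    (v : Fin 3 → LaurentPolynomial (ZMod p)) (n : ℤ)
    (h0 : ordEq (v 0) n) (h1 : ordGE (v 1) (n + 2)) (h2 : ordGE (v 2) (n + 2)) :
    ordEq ((Ti p).mulVec v 1) n ∧ ordGE ((Ti p).mulVec v 0) (n + 2) ∧
      ordGE ((Ti p).mulVec v 2) (n + 2) := by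
  rw [Ti_mulVec]
  exact ⟨h0.sub_of_ordGE (h2.mono (by omega)), h2.neg, h1.sub h2⟩

/-- T⁻¹ maps X₁ into X₃: if ord(v₀) = n and ord(v₁), ord(v₂) ≥ n+2, then
w = T⁻¹v satisfies ord(w₁) = n and ord(w₀), ord(w₂) ≥ n+2. -/
theorem Tinv_maps_X1_to_X3 (p : ℕ) [Fact (1 < p)]
    (v : Fin 3 → LaurentPolynomial (ZMod p)) (n : ℤ)
    (h0 : ordEq (v 0) n) (h1 : ordGE (v 1) (n + 2)) (h2 : ordGE (v 2) (n + 2)) :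
    ordEq ((Ti p).mulVec v 1) n ∧ ordGE ((Ti p).mulVec v 0) (n + 2) ∧
      ordGE ((Ti p).mulVec v 2) (n + 2) :=
  Tinv_maps_X1_to_X3_general p v n h0 h1 h2
end

section
/- Main theorem: over R = (ℤ/pℤ)[t,t⁻¹] for any integer p > 1, let w = T^m · B^{n_k} · T^{m_{k-1}} · B^{n_{k-1}} ⋯ T^{m_1} · B^{n_1} · T² be a product with k ≥ 1, each m_i ∈ {1,-1}, m ∈ {-1,0,1,2}, each n_i ∈ ℕ, and such that n_i ≥ 2 whenever m_{i-1} = 1 and n_i ≥ 3 whenever m_{i-1} = -1 (with the convention that these conditions apply for i ≥ 2, and n_1 ≥ 2). Then w ≠ 1 in GL(3, R). -/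
open LaurentPolynomial

noncomputable def Bm (p : ℕ) : Matrix (Fin 3) (Fin 3) (LaurentPolynomial (ZMod p)) :=
  !![-T (-1), 1, 0;
     0, 1, 0;
     0, 1, -T 1]

noncomputable def Tm (p : ℕ) : Matrix (Fin 3) (Fin 3) (LaurentPolynomial (ZMod p)) :=
  !![-1, 1, 0; -1, 0, 1; -1, 0, 0]

open Polynomial Matrix


variable {p : ℕ}

/-- "order at least e": `f = g * T e` for a polynomial `g`. -/
def OAL (p : ℕ) (e : ℤ) (f : LaurentPolynomial (ZMod p)) : Prop :=
  ∃ g : (ZMod p)[X], f = g.toLaurent * T e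

/-- "order exactly d": `f = g * T d` with `g.coeff 0 ≠ 0`. -/
def OEX (p : ℕ) (d : ℤ) (f : LaurentPolynomial (ZMod p)) : Prop :=
  ∃ g : (ZMod p)[X], f = g.toLaurent * T d ∧ g.coeff 0 ≠ 0

lemma oal_zero (e : ℤ) : OAL p e 0 := ⟨0, by simp⟩

lemma oal_mono {e' e : ℤ} (h : e' ≤ e) {f : LaurentPolynomial (ZMod p)}
    (hf : OAL p e f) : OAL p e' f := by
  obtain ⟨g, rfl⟩ := hf
  refine ⟨g * X ^ (e - e').toNat, ?_⟩
  rw [_root_.map_mul, toLaurent_X_pow, mul_assoc, ← T_add]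
  congr 2
  omega

lemma oal_add {e : ℤ} {f g : LaurentPolynomial (ZMod p)} (hf : OAL p e f)
    (hg : OAL p e g) : OAL p e (f + g) := by
  obtain ⟨a, rfl⟩ := hf; obtain ⟨b, rfl⟩ := hg
  exact ⟨a + b, by rw [map_add, add_mul]⟩

lemma oal_neg {e : ℤ} {f : LaurentPolynomial (ZMod p)} (hf : OAL p e f) :
    OAL p e (-f) := by
  obtain ⟨a, rfl⟩ := hf
  exact ⟨-a, by rw [map_neg, neg_mul]⟩

lemma oal_T_mul {e : ℤ} (c : ℤ) {f : LaurentPolynomial (ZMod p)} (hf : OAL p e f) :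
    OAL p (e + c) (T c * f) := by
  obtain ⟨a, rfl⟩ := hf
  exact ⟨a, by rw [T_add]; ring⟩

lemma oex_oal {d : ℤ} {f : LaurentPolynomial (ZMod p)} (hf : OEX p d f) : OAL p d f :=
  ⟨hf.choose, hf.choose_spec.1⟩

lemma oex_neg {d : ℤ} {f : LaurentPolynomial (ZMod p)} (hf : OEX p d f) : OEX p d (-f) := by
  obtain ⟨a, rfl, ha⟩ := hf
  exact ⟨-a, by rw [map_neg, neg_mul], by simpa using ha⟩

lemma oex_T_mul {d : ℤ} (c : ℤ) {f : LaurentPolynomial (ZMod p)} (hf : OEX p d f) :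
    OEX p (d + c) (T c * f) := by
  obtain ⟨a, rfl, ha⟩ := hf
  exact ⟨a, by rw [T_add]; ring, ha⟩

lemma oex_add_oal {d e : ℤ} {f g : LaurentPolynomial (ZMod p)} (hf : OEX p d f)
    (hg : OAL p e g) (hde : d < e) : OEX p d (f + g) := by
  obtain ⟨a, rfl, ha⟩ := hf
  obtain ⟨b, rfl⟩ := hg
  refine ⟨a + b * X ^ (e - d).toNat, ?_, ?_⟩
  · rw [map_add, add_mul, _root_.map_mul, toLaurent_X_pow, mul_assoc, ← T_add]
    congr 3
    omega
  · rw [coeff_add, coeff_mul_X_pow']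
    simp only [if_neg (by omega : ¬ ((e - d).toNat ≤ 0))]
    simpa using ha

lemma oex_sub_oal {d e : ℤ} {f g : LaurentPolynomial (ZMod p)} (hf : OEX p d f)
    (hg : OAL p e g) (hde : d < e) : OEX p d (f - g) := by
  rw [sub_eq_add_neg]; exact oex_add_oal hf (oal_neg hg) hde

lemma oex_ne_zero {d : ℤ} {f : LaurentPolynomial (ZMod p)} (hf : OEX p d f) : f ≠ 0 := by
  obtain ⟨a, rfl, ha⟩ := hf
  intro h
  have h2 : a.toLaurent * (T d * T (-d)) = 0 := by
    rw [← mul_assoc, h, zero_mul]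
  rw [← T_add, add_neg_cancel, T_zero, mul_one, toLaurent_eq_zero] at h2
  exact ha (by simp [h2])

lemma oex_ne_one {d : ℤ} (hd : d ≤ -2) {f : LaurentPolynomial (ZMod p)}
    (hf : OEX p d f) : f ≠ 1 := by
  obtain ⟨a, rfl, ha⟩ := hf
  intro h
  have h2 : a.toLaurent * (T d * T (-d)) = T (-d) := by
    rw [← mul_assoc, h, one_mul]
  rw [← T_add, add_neg_cancel, T_zero, mul_one] at h2
  rw [show ((-d : ℤ) = ((-d).toNat : ℤ)) by omega, ← toLaurent_X_pow,
    Polynomial.toLaurent_inj] at h2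
  rw [h2, coeff_X_pow] at ha
  exact ha (by rw [if_neg (by omega)])

lemma oex_one [Fact (1 < p)] : OEX p 0 1 :=
  ⟨1, by simp, by simp⟩
noncomputable def Tinv (p : ℕ) : Matrix (Fin 3) (Fin 3) (LaurentPolynomial (ZMod p)) :=
  !![0, 0, -1; 1, 0, -1; 0, 1, -1]

variable {p : ℕ}

lemma Tm_mulVec (v : Fin 3 → LaurentPolynomial (ZMod p)) :
    Tm p *ᵥ v = ![-v 0 + v 1, -v 0 + v 2, -v 0] := by
  funext i
  fin_cases i <;>
    simp [Tm, Matrix.mulVec, dotProduct, Fin.sum_univ_three] <;> ring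

lemma Bm_mulVec (v : Fin 3 → LaurentPolynomial (ZMod p)) :
    Bm p *ᵥ v = ![-T (-1) * v 0 + v 1, v 1, v 1 + -T 1 * v 2] := by
  funext i
  fin_cases i <;>
    simp [Bm, Matrix.mulVec, dotProduct, Fin.sum_univ_three] <;> ring

lemma Tm_mul_Tinv : Tm p * Tinv p = 1 := by
  ext i j
  fin_cases i <;> fin_cases j <;>
    simp [Tm, Tinv, Matrix.mul_apply, Fin.sum_univ_three, Matrix.one_apply]

lemma Tm_inv_eq : (Tm p)⁻¹ = Tinv p := Matrix.inv_eq_right_inv Tm_mul_Tinv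

lemma Tm_inv_mulVec (v : Fin 3 → LaurentPolynomial (ZMod p)) :
    (Tm p)⁻¹ *ᵥ v = ![-v 2, v 0 - v 2, v 1 - v 2] := by
  rw [Tm_inv_eq]
  funext i
  fin_cases i <;>
    simp [Tinv, Matrix.mulVec, dotProduct, Fin.sum_univ_three] <;> ring

lemma Tm_zpow_neg_one : Tm p ^ (-1 : ℤ) = (Tm p)⁻¹ := Matrix.zpow_neg_one _

/-- The invariant: `v 0` has order exactly `d`, `v 1`, `v 2` order at least `e`. -/
def Q (p : ℕ) (v : Fin 3 → LaurentPolynomial (ZMod p)) (d e : ℤ) : Prop :=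
  OEX p d (v 0) ∧ OAL p e (v 1) ∧ OAL p e (v 2)

def P (p : ℕ) (v : Fin 3 → LaurentPolynomial (ZMod p)) (d : ℤ) : Prop :=
  Q p v d (d + 2)

lemma Q_to_P {v : Fin 3 → LaurentPolynomial (ZMod p)} {d e : ℤ}
    (h : Q p v d e) (hde : d + 2 ≤ e) : P p v d :=
  ⟨h.1, oal_mono hde h.2.1, oal_mono hde h.2.2⟩

lemma oex_negT_mul {d : ℤ} {f : LaurentPolynomial (ZMod p)} (hf : OEX p d f) :
    OEX p (d - 1) (-T (-1) * f) := by
  have h := oex_T_mul (-1) (oex_neg hf)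
  rw [neg_mul_comm]
  simpa [sub_eq_add_neg] using h

lemma oal_negT_mul {e : ℤ} {f : LaurentPolynomial (ZMod p)} (hf : OAL p e f) :
    OAL p e (-T 1 * f) := by
  have h := oal_T_mul 1 (oal_neg hf)
  rw [neg_mul_comm]
  exact oal_mono (by omega) h

lemma oal_negTinv_mul {e : ℤ} {f : LaurentPolynomial (ZMod p)} (hf : OAL p e f) :
    OAL p (e - 1) (-T (-1) * f) := by
  have h := oal_T_mul (-1) (oal_neg hf)
  rw [neg_mul_comm]
  exact oal_mono (by omega) h

lemma Qstep {v : Fin 3 → LaurentPolynomial (ZMod p)} {d e : ℤ} (hde : d ≤ e)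
    (h : Q p v d e) : Q p (Bm p *ᵥ v) (d - 1) e := by
  obtain ⟨h0, h1, h2⟩ := h
  rw [Bm_mulVec]
  refine ⟨?_, h1, ?_⟩
  · show OEX p (d - 1) (-T (-1) * v 0 + v 1)
    exact oex_add_oal (oex_negT_mul h0) h1 (by omega)
  · show OAL p e (v 1 + -T 1 * v 2)
    exact oal_add h1 (oal_negT_mul h2)

lemma Qpow {v : Fin 3 → LaurentPolynomial (ZMod p)} {d e : ℤ} (hde : d ≤ e)
    (h : Q p v d e) (n : ℕ) : Q p ((Bm p ^ n) *ᵥ v) (d - n) e := by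
  induction n with
  | zero => simpa using h
  | succ n ih =>
      have hrw : Bm p ^ (n + 1) *ᵥ v = Bm p *ᵥ (Bm p ^ n *ᵥ v) := by
        rw [Matrix.mulVec_mulVec, ← pow_succ']
      have key := Qstep (p := p) (by omega : d - (n : ℤ) ≤ e) ih
      rw [hrw, show d - ((n + 1 : ℕ) : ℤ) = d - (n : ℤ) - 1 by push_cast; ring]
      exact key

lemma TstepA {v : Fin 3 → LaurentPolynomial (ZMod p)} {d : ℤ} (h : P p v d) :
    Q p (Tm p *ᵥ v) d d := by
  obtain ⟨h0, h1, h2⟩ := h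
  rw [Tm_mulVec]
  refine ⟨?_, ?_, ?_⟩
  · exact oex_add_oal (oex_neg h0) h1 (by omega)
  · exact oal_add (oex_oal (oex_neg h0)) (oal_mono (by omega) h2)
  · exact oex_oal (oex_neg h0)

lemma TstepB {v : Fin 3 → LaurentPolynomial (ZMod p)} {d : ℤ} (h : P p v d) :
    Q p (Bm p *ᵥ ((Tm p)⁻¹ *ᵥ v)) d d := by
  obtain ⟨h0, h1, h2⟩ := h
  rw [Tm_inv_mulVec, Bm_mulVec]
  have hsub : OEX p d (v 0 - v 2) := oex_sub_oal h0 h2 (by omega)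
  refine ⟨?_, oex_oal hsub, ?_⟩
  · show OEX p d (-T (-1) * -v 2 + (v 0 - v 2))
    rw [add_comm]
    exact oex_add_oal hsub (oal_negTinv_mul (oal_neg h2)) (by omega)
  · show OAL p d (v 0 - v 2 + -T 1 * (v 1 - v 2))
    have hs : OAL p (d + 2) (v 1 - v 2) := by
      rw [sub_eq_add_neg]; exact oal_add h1 (oal_neg h2)
    exact oal_add (oex_oal hsub) (oal_mono (by omega) (oal_negT_mul hs))

lemma stepT {v : Fin 3 → LaurentPolynomial (ZMod p)} {d : ℤ} {n : ℕ} (hn : 2 ≤ n)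
    (h : P p v d) : P p (Bm p ^ n *ᵥ (Tm p *ᵥ v)) (d - n) :=
  Q_to_P (Qpow le_rfl (TstepA h) n) (by omega)

lemma stepTinv {v : Fin 3 → LaurentPolynomial (ZMod p)} {d : ℤ} {n : ℕ} (hn : 3 ≤ n)
    (h : P p v d) : P p (Bm p ^ n *ᵥ ((Tm p)⁻¹ *ᵥ v)) (d - n + 1) := by
  have hrw : Bm p ^ n *ᵥ ((Tm p)⁻¹ *ᵥ v)
      = Bm p ^ (n - 1) *ᵥ (Bm p *ᵥ ((Tm p)⁻¹ *ᵥ v)) := by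
    rw [Matrix.mulVec_mulVec, Matrix.mulVec_mulVec, Matrix.mulVec_mulVec,
      ← pow_succ, Nat.sub_add_cancel (by omega)]
  have key := Qpow le_rfl (TstepB h) (n - 1)
  rw [hrw, show d - (n : ℤ) + 1 = d - ((n - 1 : ℕ) : ℤ)
    by have : ((n - 1 : ℕ) : ℤ) = (n : ℤ) - 1 := by omega
       rw [this]; ring]
  exact Q_to_P key (by omega)

def chain : ℕ → List (ℤ × ℕ) → Prop
  | n, [] => 2 ≤ n
  | n, q :: r => ((q.1 = 1 ∧ 2 ≤ n) ∨ (q.1 = -1 ∧ 3 ≤ n)) ∧ chain q.2 r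

noncomputable def W (p : ℕ) (l : List (ℤ × ℕ)) :
    Matrix (Fin 3) (Fin 3) (LaurentPolynomial (ZMod p)) :=
  (l.map fun q => Tm p ^ q.1 * Bm p ^ q.2).prod * Tm p ^ 2

lemma key [Fact (1 < p)] (n₀ : ℕ) (l : List (ℤ × ℕ)) (h : chain n₀ l) :
    ∃ d ≤ -2, P p ((Bm p ^ n₀ * W p l) *ᵥ ![0, 0, 1]) d := by
  induction l generalizing n₀ with
  | nil =>
      have hn : 2 ≤ n₀ := h
      have e1 : Tm p *ᵥ (![0, 0, 1] : Fin 3 → LaurentPolynomial (ZMod p)) = ![0, 1, 0] := by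
        rw [Tm_mulVec]; funext i; fin_cases i <;> simp
      have e2 : Tm p *ᵥ (![0, 1, 0] : Fin 3 → LaurentPolynomial (ZMod p)) = ![1, 0, 0] := by
        rw [Tm_mulVec]; funext i; fin_cases i <;> simp
      have e3 : (Bm p ^ n₀ * W p []) *ᵥ ![0, 0, 1] = Bm p ^ n₀ *ᵥ ![1, 0, 0] := by
        rw [← Matrix.mulVec_mulVec]
        congr 1
        simp only [W, List.map_nil, List.prod_nil, one_mul]
        rw [pow_two, ← Matrix.mulVec_mulVec, e1, e2]
      have hQ : Q p (![1, 0, 0] : Fin 3 → LaurentPolynomial (ZMod p)) 0 0 := by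
        refine ⟨?_, ?_, ?_⟩
        · simpa using oex_one (p := p)
        · simpa using oal_zero (p := p) 0
        · simpa using oal_zero (p := p) 0
      refine ⟨0 - (n₀ : ℤ), by omega, ?_⟩
      rw [e3]
      exact Q_to_P (Qpow le_rfl hQ n₀) (by omega)
  | cons q r ih =>
      obtain ⟨hq, hr⟩ := h
      obtain ⟨d, hd, hP⟩ := ih q.2 hr
      have hW : W p (q :: r) = Tm p ^ q.1 * (Bm p ^ q.2 * W p r) := by
        simp only [W, List.map_cons, List.prod_cons]
        rw [mul_assoc, mul_assoc]
      rcases hq with ⟨hq1, hn⟩ | ⟨hq1, hn⟩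
      · refine ⟨d - (n₀ : ℤ), by omega, ?_⟩
        have hrw : (Bm p ^ n₀ * W p (q :: r)) *ᵥ ![0, 0, 1]
            = Bm p ^ n₀ *ᵥ (Tm p *ᵥ ((Bm p ^ q.2 * W p r) *ᵥ ![0, 0, 1])) := by
          rw [hW, hq1, zpow_one, Matrix.mulVec_mulVec, Matrix.mulVec_mulVec,
            ← mul_assoc, ← mul_assoc]
        rw [hrw]
        exact stepT hn hP
      · refine ⟨d - (n₀ : ℤ) + 1, by omega, ?_⟩
        have hrw : (Bm p ^ n₀ * W p (q :: r)) *ᵥ ![0, 0, 1]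
            = Bm p ^ n₀ *ᵥ ((Tm p)⁻¹ *ᵥ ((Bm p ^ q.2 * W p r) *ᵥ ![0, 0, 1])) := by
          rw [hW, hq1, Matrix.zpow_neg_one, Matrix.mulVec_mulVec, Matrix.mulVec_mulVec,
            ← mul_assoc, ← mul_assoc]
        rw [hrw]
        exact stepTinv hn hP

lemma chain_aux (μ : ℕ → ℤ) (ν : ℕ → ℕ) : ∀ (k : ℕ) (n₀ : ℕ),
    (∀ _ : 0 < k, (μ 0 = 1 ∧ 2 ≤ n₀) ∨ (μ 0 = -1 ∧ 3 ≤ n₀)) →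
    (∀ i, i + 1 < k → (μ (i + 1) = 1 ∧ 2 ≤ ν i) ∨ (μ (i + 1) = -1 ∧ 3 ≤ ν i)) →
    (0 < k → 2 ≤ ν (k - 1)) → (k = 0 → 2 ≤ n₀) →
    chain n₀ (List.ofFn fun i : Fin k => (μ i, ν i)) := by
  intro k
  induction k generalizing μ ν with
  | zero =>
      intro n₀ _ _ _ hempty
      simpa [chain] using hempty rfl
  | succ k ih =>
      intro n₀ h0 hlink hlast _
      rw [List.ofFn_succ]
      refine ⟨?_, ?_⟩
      · simpa using h0 (Nat.succ_pos k)
      · have := ih (fun j => μ (j + 1)) (fun j => ν (j + 1)) (ν 0)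
          (fun h => hlink 0 (by omega))
          (fun i hi => hlink (i + 1) (by omega))
          (fun h => by
            have := hlast (by omega)
            simpa [Nat.succ_sub_one, Nat.sub_add_cancel h] using this)
          (fun h => by
            have := hlast (by omega)
            simp [h] at this ⊢
            exact this)
        exact this

/-- Main theorem: any product
`T^m B^{n_k} T^{m_{k-1}} B^{n_{k-1}} ⋯ T^{m_1} B^{n_1} T^2`
with `m ∈ {-1,0,1,2}`, `m_i ∈ {1,-1}`, `n_1 ≥ 2`, and `n_i ≥ 2` whenever
`m_{i-1} = 1`, `n_i ≥ 3` whenever `m_{i-1} = -1`, is not the identity matrix.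
Here the factor at list position `i` (0-based, leftmost first) is
`T^(μ i) * B^(ν i)`, so `μ 0 = m`, `ν 0 = n_k`, …, `ν (k-1) = n_1`, and the
condition relating `n_i` to `m_{i-1}` relates `ν i` to `μ (i+1)`. -/
theorem main_theorem (p : ℕ) [Fact (1 < p)]
    (k : ℕ) (hk : 0 < k) (μ : Fin k → ℤ) (ν : Fin k → ℕ)
    (hμ0 : μ ⟨0, hk⟩ ∈ ({-1, 0, 1, 2} : Set ℤ))
    (hμ : ∀ i : Fin k, 0 < (i : ℕ) → μ i = 1 ∨ μ i = -1)
    (hν : ∀ (i : Fin k) (h : (i : ℕ) + 1 < k),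
      (μ ⟨(i : ℕ) + 1, h⟩ = 1 → 2 ≤ ν i) ∧ (μ ⟨(i : ℕ) + 1, h⟩ = -1 → 3 ≤ ν i))
    (hν_last : 2 ≤ ν ⟨k - 1, Nat.sub_lt hk one_pos⟩) :
    (List.ofFn (fun i : Fin k => Tm p ^ (μ i) * Bm p ^ (ν i))).prod * Tm p ^ 2 ≠ 1 := by
  obtain ⟨k', rfl⟩ : ∃ k', k = k' + 1 := ⟨k - 1, by omega⟩
  intro hcontra
  -- extended index functions
  set μ' : ℕ → ℤ := fun j => if h : j + 1 < k' + 1 then μ ⟨j + 1, h⟩ else 0 with hμ'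
  set ν' : ℕ → ℕ := fun j => if h : j + 1 < k' + 1 then ν ⟨j + 1, h⟩ else 0 with hν'
  have hchain : chain (ν ⟨0, hk⟩) (List.ofFn fun i : Fin k' => (μ' i, ν' i)) := by
    apply chain_aux
    · intro h
      have hm := hμ ⟨1, by omega⟩ (by simp)
      have hb := hν ⟨0, hk⟩ (by show 0 + 1 < k' + 1; omega)
      simp only [hμ', dif_pos (show 0 + 1 < k' + 1 by omega)]
      rcases hm with hm | hm
      · exact Or.inl ⟨hm, hb.1 hm⟩
      · exact Or.inr ⟨hm, hb.2 hm⟩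
    · intro i hi
      have hm := hμ ⟨i + 2, by omega⟩ (by simp)
      have hb := hν ⟨i + 1, by omega⟩ (by show i + 1 + 1 < k' + 1; omega)
      simp only [hμ', hν', dif_pos (show i + 1 + 1 < k' + 1 by omega),
        dif_pos (show i + 1 < k' + 1 by omega)]
      rcases hm with hm | hm
      · exact Or.inl ⟨hm, hb.1 hm⟩
      · exact Or.inr ⟨hm, hb.2 hm⟩
    · intro h
      simp only [hν', dif_pos (show k' - 1 + 1 < k' + 1 by omega)]
      have he : (⟨k' - 1 + 1, by omega⟩ : Fin (k' + 1)) = ⟨k' + 1 - 1, Nat.sub_lt hk one_pos⟩ :=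
        Fin.ext (by show k' - 1 + 1 = k' + 1 - 1; omega)
      rw [he]
      exact hν_last
    · intro h
      have he : (⟨0, hk⟩ : Fin (k' + 1)) = ⟨k' + 1 - 1, Nat.sub_lt hk one_pos⟩ :=
        Fin.ext (by show 0 = k' + 1 - 1; omega)
      rw [he]
      exact hν_last
  set tl : List (ℤ × ℕ) := List.ofFn fun i : Fin k' => (μ' i, ν' i) with htl
  -- rewrite the word
  have hword : (List.ofFn (fun i : Fin (k' + 1) => Tm p ^ (μ i) * Bm p ^ (ν i))).prod * Tm p ^ 2
      = Tm p ^ (μ ⟨0, hk⟩) * (Bm p ^ (ν ⟨0, hk⟩) * W p tl) := by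
    have h00 : (0 : Fin (k' + 1)) = ⟨0, hk⟩ := by ext; simp
    have htail : (List.ofFn fun i : Fin k' =>
        Tm p ^ (μ i.succ) * Bm p ^ (ν i.succ)) = tl.map fun q => Tm p ^ q.1 * Bm p ^ q.2 := by
      rw [htl, List.map_ofFn]
      congr 1
      funext i
      simp only [Function.comp, hμ', hν', dif_pos (show (i : ℕ) + 1 < k' + 1 by omega)]
      rfl
    rw [List.ofFn_succ, List.prod_cons, h00, htail, W, mul_assoc, mul_assoc]
  rw [hword] at hcontra
  obtain ⟨d, hd, hP⟩ := key (p := p) (ν ⟨0, hk⟩) tl hchain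
  set u : Fin 3 → LaurentPolynomial (ZMod p) :=
    (Bm p ^ (ν ⟨0, hk⟩) * W p tl) *ᵥ ![0, 0, 1] with hu
  have heq : Tm p ^ (μ ⟨0, hk⟩) *ᵥ u = ![0, 0, 1] := by
    rw [hu, Matrix.mulVec_mulVec, hcontra, Matrix.one_mulVec]
  obtain ⟨hP0, hP1, hP2⟩ := hP
  simp only [Set.mem_insert_iff, Set.mem_singleton_iff] at hμ0
  rcases hμ0 with h | h | h | h <;> rw [h] at heq
  · rw [Matrix.zpow_neg_one, Tm_inv_mulVec] at heq
    have h1 : u 0 - u 2 = 0 := by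
      have := congrFun heq 1
      simpa using this
    exact oex_ne_zero (oex_sub_oal hP0 hP2 (by omega)) h1
  · rw [zpow_zero, Matrix.one_mulVec] at heq
    have h1 : u 0 = 0 := by
      have := congrFun heq 0
      simpa using this
    exact oex_ne_zero hP0 h1
  · rw [zpow_one, Tm_mulVec] at heq
    have h1 : -u 0 + u 1 = 0 := by
      have := congrFun heq 0
      simpa using this
    exact oex_ne_zero (oex_add_oal (oex_neg hP0) hP1 (by omega)) h1
  · rw [show (2 : ℤ) = ((2 : ℕ) : ℤ) by norm_num, zpow_natCast, pow_two,
      ← Matrix.mulVec_mulVec, Tm_mulVec, Tm_mulVec] at heq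
    have h1 : u 0 - u 1 = 1 := by
      have := congrFun heq 2
      simp at this
      linear_combination this
    exact oex_ne_one hd (oex_sub_oal hP0 hP1 (by omega)) h1
end

section
/- Corollary: over R = (ℤ/pℤ)[t,t⁻¹] for any integer p > 1, the matrices A³ and B³ generate a free group of rank 2 in GL(3,R); i.e., no nonempty reduced word in A³, B³ and their inverses equals the identity matrix. -/
open LaurentPolynomial

noncomputable def Am (p : ℕ) : Matrix (Fin 3) (Fin 3) (LaurentPolynomial (ZMod p)) :=
  !![0, 0, -T (-1);
     0, -T 1, -T (-1) + T 1;
     -1, 0, -T (-1) + 1]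

set_option synthInstance.maxHeartbeats 1000000
namespace A3B3
open Pointwise

/-! ### Degree lemmas for Laurent polynomials -/

section DegLemmas
variable {S : Type*} [CommRing S]
local notation "R" => LaurentPolynomial S

lemma deg_neg (f : R) : (-f).degree = f.degree := by
  unfold LaurentPolynomial.degree; rw [AddMonoidAlgebra.coeff_neg, Finsupp.support_neg]

lemma deg_add_le (f g : R) : (f + g).degree ≤ max f.degree g.degree := by
  unfold LaurentPolynomial.degree
  refine Finset.max_le fun m hm => ?_
  rcases Finset.mem_union.mp (Finsupp.support_add hm) with h | h
  · exact le_max_of_le_left (Finset.le_max h)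
  · exact le_max_of_le_right (Finset.le_max h)

lemma apply_eq_zero_of_deg_lt {f : R} {m : ℤ} (h : f.degree < (m : WithBot ℤ)) : f.coeff m = 0 := by
  by_contra hne
  exact absurd h (not_lt.mpr (Finset.le_max (Finsupp.mem_support_iff.mpr hne)))

lemma deg_add_right {f g : R} (h : f.degree < g.degree) : (f + g).degree = g.degree := by
  rcases eq_or_ne g 0 with rfl | hg
  · simp at h
  · obtain ⟨m, hm⟩ := Finset.max_of_nonempty (Finsupp.support_nonempty_iff.mpr (AddMonoidAlgebra.coeff_eq_zero.not.mpr hg))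
    have hdm : g.degree = (m : WithBot ℤ) := hm
    refine le_antisymm ((deg_add_le f g).trans (by simp [le_of_lt, h])) ?_
    have hfm : f.coeff m = 0 := apply_eq_zero_of_deg_lt (hdm ▸ h)
    have hgm : g.coeff m ≠ 0 := Finsupp.mem_support_iff.mp (Finset.mem_of_max hm)
    have hne : (f + g).coeff m ≠ 0 := by rw [AddMonoidAlgebra.coeff_add, Finsupp.add_apply, hfm, zero_add]; exact hgm
    rw [hdm]
    exact Finset.le_max (Finsupp.mem_support_iff.mpr hne)

lemma T_mul_apply (k : ℤ) (f : R) (m : ℤ) : ((T k : R) * f).coeff m = f.coeff (m - k) := by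
  have : (T k : R) = AddMonoidAlgebra.single k 1 := rfl
  rw [this, AddMonoidAlgebra.coeff_single_mul_apply, one_mul, neg_add_eq_sub]

lemma deg_T_mul (k : ℤ) (f : R) : ((T k : R) * f).degree = (k : WithBot ℤ) + f.degree := by
  rcases eq_or_ne f 0 with rfl | hf
  · simp [LaurentPolynomial.degree]
  · obtain ⟨m, hm⟩ := Finset.max_of_nonempty (Finsupp.support_nonempty_iff.mpr (AddMonoidAlgebra.coeff_eq_zero.not.mpr hf))
    have hdm : f.degree = (m : WithBot ℤ) := hm
    rw [hdm]
    refine le_antisymm (Finset.max_le fun n hn => ?_) ?_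
    · have : f.coeff (n - k) ≠ 0 := by rw [← T_mul_apply k f n]; exact Finsupp.mem_support_iff.mp hn
      have h1 : ((n - k : ℤ) : WithBot ℤ) ≤ m := hdm ▸ Finset.le_max (Finsupp.mem_support_iff.mpr this)
      have h2 : n - k ≤ m := by exact_mod_cast h1
      have h3 : n ≤ k + m := by omega
      exact_mod_cast WithBot.coe_le_coe.mpr h3
    · have : ((T k : R) * f).coeff (k + m) ≠ 0 := by
        rw [T_mul_apply, add_sub_cancel_left]
        exact Finsupp.mem_support_iff.mp (Finset.mem_of_max hm)
      exact_mod_cast Finset.le_max (Finsupp.mem_support_iff.mpr this)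

lemma wb_solve {x : WithBot ℤ} {k d : ℤ} (h : (k : WithBot ℤ) + x = (d : WithBot ℤ)) :
    x = ((d - k : ℤ) : WithBot ℤ) := by
  cases x with
  | bot => simp at h
  | coe m =>
      have : k + m = d := by exact_mod_cast h
      have : m = d - k := by omega
      exact_mod_cast this

lemma wb_small {x : WithBot ℤ} {d e : ℤ} (h : x + (3 : ℤ) ≤ (d : WithBot ℤ)) {k : ℤ}
    (hk : k ≤ 2 + e - d) : (k : WithBot ℤ) + x < (e : WithBot ℤ) := by
  cases x with
  | bot => simpa using WithBot.bot_lt_coe e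
  | coe m =>
      have : m + 3 ≤ d := by exact_mod_cast h
      have : k + m < e := by omega
      exact_mod_cast this

lemma wb_small0 {x : WithBot ℤ} {d e : ℤ} (h : x + (3 : ℤ) ≤ (d : WithBot ℤ))
    (he : d ≤ e + 2) : x < (e : WithBot ℤ) := by
  have := wb_small (e := e) h (k := 0) (by omega)
  rwa [WithBot.coe_zero, zero_add] at this

lemma deg_one_add_T_mul (f : R) : ((1 + T 1) * f).degree = ((1 : ℤ) : WithBot ℤ) + f.degree := by
  have h : (1 + T 1) * f = f + T 1 * f := by ring
  rcases eq_or_ne f 0 with rfl | hf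
  · simp [LaurentPolynomial.degree]
  · have hT := deg_T_mul (S := S) 1 f
    have hfd : f.degree ≠ ⊥ := by rwa [Ne, LaurentPolynomial.degree_eq_bot_iff]
    obtain ⟨m, hm⟩ := WithBot.ne_bot_iff_exists.mp hfd
    rw [h, deg_add_right, hT]
    rw [hT, ← hm]
    exact_mod_cast (by omega : m < 1 + m)

lemma deg_Tsub_mul_le (f : R) : ((T 1 - 1) * f).degree ≤ ((1 : ℤ) : WithBot ℤ) + f.degree := by
  have h : (T 1 - 1) * f = T 1 * f + -f := by ring
  rw [h]
  refine (deg_add_le _ _).trans ?_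
  rw [deg_T_mul, deg_neg]
  refine max_le le_rfl ?_
  exact le_add_of_nonneg_left (by exact_mod_cast (by norm_num : (0:ℤ) ≤ 1))

lemma deg_one_sub_T_mul_le (f : R) : ((1 - T 1) * f).degree ≤ ((1 : ℤ) : WithBot ℤ) + f.degree := by
  have h : (1 - T 1) * f = -((T 1 - 1) * f) := by ring
  rw [h, deg_neg]
  exact deg_Tsub_mul_le f

lemma deg_one_add_sq_mul_le (f : R) :
    ((1 + T 1 * T 1) * f).degree ≤ ((2 : ℤ) : WithBot ℤ) + f.degree := by
  have h : (1 + T 1 * T 1) * f = f + T 1 * (T 1 * f) := by ring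
  rw [h]
  refine (deg_add_le _ _).trans ?_
  rw [deg_T_mul, deg_T_mul, ← add_assoc]
  refine max_le ?_ (le_of_eq (by norm_num))
  exact le_add_of_nonneg_left (by exact_mod_cast (by norm_num : (0:ℤ) ≤ 2))

lemma deg_neg_one_add_sq_mul_le (f : R) :
    (-(1 + T 1 * T 1) * f).degree ≤ ((2 : ℤ) : WithBot ℤ) + f.degree := by
  have h : -(1 + T 1 * T 1) * f = -((1 + T 1 * T 1) * f) := by ring
  rw [h, deg_neg]
  exact deg_one_add_sq_mul_le f

lemma deg_row {f s1 s2 m : R} {e : ℤ} (hid : (1 + T 1) * f = s1 + s2 + m)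
    (h1 : s1.degree < (e : WithBot ℤ)) (h2 : s2.degree < (e : WithBot ℤ))
    (hm : m.degree = (e : WithBot ℤ)) :
    f.degree = ((e - 1 : ℤ) : WithBot ℤ) := by
  have hsum : ((1 + T 1) * f).degree = (e : WithBot ℤ) := by
    rw [hid, deg_add_right, hm]
    rw [hm]
    exact lt_of_le_of_lt (deg_add_le _ _) (max_lt h1 h2)
  rw [deg_one_add_T_mul] at hsum
  exact wb_solve hsum

end DegLemmas

/-! ### The eigen-functionals and identities -/

variable {p : ℕ}
local notation "R" => LaurentPolynomial (ZMod p)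

noncomputable def aA (v : Fin 3 → R) : R := v 0 - v 2
noncomputable def bA (v : Fin 3 → R) : R := v 0 - (1 + T 1) * v 1 + T 1 * v 2
noncomputable def cA (v : Fin 3 → R) : R := -(T 1) * v 0 - v 2
noncomputable def aB (v : Fin 3 → R) : R := v 1
noncomputable def bB (v : Fin 3 → R) : R := -v 1 + (1 + T 1) * v 2
noncomputable def cB (v : Fin 3 → R) : R := (1 + T 1) * v 0 - T 1 * v 1

lemma hT : (T 1 : R) * T (-1) = 1 := by
  rw [← T_add]; norm_num

lemma eigA1 (v : Fin 3 → R) : aA ((Am p).mulVec v) = aA v := by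
  simp [Am, aA, Matrix.mulVec, dotProduct, Fin.sum_univ_three]
  ring

lemma eigA2 (v : Fin 3 → R) : bA ((Am p).mulVec v) = -T 1 * bA v := by
  simp [Am, bA, Matrix.mulVec, dotProduct, Fin.sum_univ_three]
  ring

lemma eigA3 (v : Fin 3 → R) : cA ((Am p).mulVec v) = -T (-1) * cA v := by
  simp [Am, cA, Matrix.mulVec, dotProduct, Fin.sum_univ_three]
  linear_combination (- v 0) * hT

lemma eigB1 (v : Fin 3 → R) : aB ((Bm p).mulVec v) = aB v := by
  simp [Bm, aB, Matrix.mulVec, dotProduct, Fin.sum_univ_three]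

lemma eigB2 (v : Fin 3 → R) : bB ((Bm p).mulVec v) = -T 1 * bB v := by
  simp [Bm, bB, Matrix.mulVec, dotProduct, Fin.sum_univ_three]
  ring

lemma eigB3 (v : Fin 3 → R) : cB ((Bm p).mulVec v) = -T (-1) * cB v := by
  simp [Bm, cB, Matrix.mulVec, dotProduct, Fin.sum_univ_three]
  linear_combination (-(v 1)) * hT

lemma detA : (Am p).det = 1 := by
  rw [Matrix.det_fin_three]
  simp only [Am, Matrix.cons_val', Matrix.cons_val_zero, Matrix.empty_val',
    Matrix.cons_val_fin_one, Matrix.cons_val_one, Matrix.head_cons, Matrix.head_fin_const,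
    Matrix.cons_val_two, Matrix.tail_cons, Matrix.of_apply]
  linear_combination hT

lemma detB : (Bm p).det = 1 := by
  rw [Matrix.det_fin_three]
  simp only [Bm, Matrix.cons_val', Matrix.cons_val_zero, Matrix.empty_val',
    Matrix.cons_val_fin_one, Matrix.cons_val_one, Matrix.head_cons, Matrix.head_fin_const,
    Matrix.cons_val_two, Matrix.tail_cons, Matrix.of_apply]
  linear_combination hT

/-! ### Balance lemmas -/

lemma balanceB_b {v : Fin 3 → R} {d : ℤ} (hb : (bB v).degree = (d : WithBot ℤ))
    (h1 : (aB v).degree + (3:ℤ) ≤ (d : WithBot ℤ)) (h2 : (cB v).degree + (3:ℤ) ≤ (d : WithBot ℤ)) :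
    (aA v).degree = ((d - 1 : ℤ) : WithBot ℤ) ∧ (bA v).degree = (d : WithBot ℤ) ∧
      (cA v).degree = ((d - 1 : ℤ) : WithBot ℤ) := by
  refine ⟨?_, ?_, ?_⟩
  · refine deg_row (e := d) (s1 := (T 1 - 1) * aB v) (s2 := cB v) (m := -(bB v))
      (by simp only [aA, aB, bB, cB]; ring) ?_ ?_ (by rw [deg_neg, hb])
    · exact lt_of_le_of_lt (deg_Tsub_mul_le _) (wb_small h1 (by omega))
    · exact wb_small0 h2 (by omega)
  · have h := deg_row (f := bA v) (e := d + 1) (s1 := -(1 + T 1 * T 1) * aB v) (s2 := cB v)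
      (m := T 1 * bB v) (by simp only [bA, aB, bB, cB]; ring) ?_ ?_ ?_
    · rw [h]; norm_num
    · exact lt_of_le_of_lt (deg_neg_one_add_sq_mul_le _) (wb_small h1 (by omega))
    · exact wb_small0 h2 (by omega)
    · rw [deg_T_mul, hb]; exact_mod_cast (show (1:ℤ) + d = d + 1 by omega)
  · refine deg_row (e := d) (s1 := -(1 + T 1 * T 1) * aB v) (s2 := -(T 1 * cB v)) (m := -(bB v))
      (by simp only [cA, aB, bB, cB]; ring) ?_ ?_ (by rw [deg_neg, hb])
    · exact lt_of_le_of_lt (deg_neg_one_add_sq_mul_le _) (wb_small h1 (by omega))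
    · rw [deg_neg, deg_T_mul]; exact wb_small h2 (by omega)

lemma balanceB_c {v : Fin 3 → R} {d : ℤ} (hb : (cB v).degree = (d : WithBot ℤ))
    (h1 : (aB v).degree + (3:ℤ) ≤ (d : WithBot ℤ)) (h2 : (bB v).degree + (3:ℤ) ≤ (d : WithBot ℤ)) :
    (aA v).degree = ((d - 1 : ℤ) : WithBot ℤ) ∧ (bA v).degree = ((d - 1 : ℤ) : WithBot ℤ) ∧
      (cA v).degree = (d : WithBot ℤ) := by
  refine ⟨?_, ?_, ?_⟩
  · refine deg_row (e := d) (s1 := (T 1 - 1) * aB v) (s2 := -(bB v)) (m := cB v)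
      (by simp only [aA, aB, bB, cB]; ring) ?_ ?_ hb
    · exact lt_of_le_of_lt (deg_Tsub_mul_le _) (wb_small h1 (by omega))
    · rw [deg_neg]; exact wb_small0 h2 (by omega)
  · refine deg_row (e := d) (s1 := -(1 + T 1 * T 1) * aB v) (s2 := T 1 * bB v) (m := cB v)
      (by simp only [bA, aB, bB, cB]; ring) ?_ ?_ hb
    · exact lt_of_le_of_lt (deg_neg_one_add_sq_mul_le _) (wb_small h1 (by omega))
    · rw [deg_T_mul]; exact wb_small h2 (by omega)
  · have h := deg_row (f := cA v) (e := d + 1) (s1 := -(1 + T 1 * T 1) * aB v) (s2 := -(bB v))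
      (m := -(T 1 * cB v)) (by simp only [cA, aB, bB, cB]; ring) ?_ ?_ ?_
    · rw [h]; norm_num
    · exact lt_of_le_of_lt (deg_neg_one_add_sq_mul_le _) (wb_small h1 (by omega))
    · rw [deg_neg]; exact wb_small0 h2 (by omega)
    · rw [deg_neg, deg_T_mul, hb]; exact_mod_cast (show (1:ℤ) + d = d + 1 by omega)

lemma balanceA_b {v : Fin 3 → R} {d : ℤ} (hb : (bA v).degree = (d : WithBot ℤ))
    (h1 : (aA v).degree + (3:ℤ) ≤ (d : WithBot ℤ)) (h2 : (cA v).degree + (3:ℤ) ≤ (d : WithBot ℤ)) :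
    (aB v).degree = ((d - 1 : ℤ) : WithBot ℤ) ∧ (bB v).degree = ((d - 1 : ℤ) : WithBot ℤ) ∧
      (cB v).degree = (d : WithBot ℤ) := by
  refine ⟨?_, ?_, ?_⟩
  · refine deg_row (e := d) (s1 := (1 - T 1) * aA v) (s2 := -(cA v)) (m := -(bA v))
      (by simp only [aB, aA, bA, cA]; ring) ?_ ?_ (by rw [deg_neg, hb])
    · exact lt_of_le_of_lt (deg_one_sub_T_mul_le _) (wb_small h1 (by omega))
    · rw [deg_neg]; exact wb_small0 h2 (by omega)
  · refine deg_row (e := d) (s1 := -(1 + T 1 * T 1) * aA v) (s2 := -(T 1 * cA v)) (m := bA v)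
      (by simp only [bB, aA, bA, cA]; ring) ?_ ?_ hb
    · exact lt_of_le_of_lt (deg_neg_one_add_sq_mul_le _) (wb_small h1 (by omega))
    · rw [deg_neg, deg_T_mul]; exact wb_small h2 (by omega)
  · have h := deg_row (f := cB v) (e := d + 1) (s1 := (1 + T 1 * T 1) * aA v) (s2 := -(cA v))
      (m := T 1 * bA v) (by simp only [cB, aA, bA, cA]; ring) ?_ ?_ ?_
    · rw [h]; norm_num
    · exact lt_of_le_of_lt (deg_one_add_sq_mul_le _) (wb_small h1 (by omega))
    · rw [deg_neg]; exact wb_small0 h2 (by omega)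
    · rw [deg_T_mul, hb]; exact_mod_cast (show (1:ℤ) + d = d + 1 by omega)

lemma balanceA_c {v : Fin 3 → R} {d : ℤ} (hb : (cA v).degree = (d : WithBot ℤ))
    (h1 : (aA v).degree + (3:ℤ) ≤ (d : WithBot ℤ)) (h2 : (bA v).degree + (3:ℤ) ≤ (d : WithBot ℤ)) :
    (aB v).degree = ((d - 1 : ℤ) : WithBot ℤ) ∧ (bB v).degree = (d : WithBot ℤ) ∧
      (cB v).degree = ((d - 1 : ℤ) : WithBot ℤ) := by
  refine ⟨?_, ?_, ?_⟩
  · refine deg_row (e := d) (s1 := (1 - T 1) * aA v) (s2 := -(bA v)) (m := -(cA v))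
      (by simp only [aB, aA, bA, cA]; ring) ?_ ?_ (by rw [deg_neg, hb])
    · exact lt_of_le_of_lt (deg_one_sub_T_mul_le _) (wb_small h1 (by omega))
    · rw [deg_neg]; exact wb_small0 h2 (by omega)
  · have h := deg_row (f := bB v) (e := d + 1) (s1 := -(1 + T 1 * T 1) * aA v) (s2 := bA v)
      (m := -(T 1 * cA v)) (by simp only [bB, aA, bA, cA]; ring) ?_ ?_ ?_
    · rw [h]; norm_num
    · exact lt_of_le_of_lt (deg_neg_one_add_sq_mul_le _) (wb_small h1 (by omega))
    · exact wb_small0 h2 (by omega)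
    · rw [deg_neg, deg_T_mul, hb]; exact_mod_cast (show (1:ℤ) + d = d + 1 by omega)
  · refine deg_row (e := d) (s1 := (1 + T 1 * T 1) * aA v) (s2 := T 1 * bA v) (m := -(cA v))
      (by simp only [cB, aA, bA, cA]; ring) ?_ ?_ (by rw [deg_neg, hb])
    · exact lt_of_le_of_lt (deg_one_add_sq_mul_le _) (wb_small h1 (by omega))
    · rw [deg_T_mul]; exact wb_small h2 (by omega)


/-! ### Units and the action -/

noncomputable def uA : (Matrix (Fin 3) (Fin 3) R)ˣ :=
  ((Matrix.isUnit_iff_isUnit_det _).mpr (by rw [detA]; exact isUnit_one)).unit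

noncomputable def uB : (Matrix (Fin 3) (Fin 3) R)ˣ :=
  ((Matrix.isUnit_iff_isUnit_det _).mpr (by rw [detB]; exact isUnit_one)).unit

lemma uA_val : (uA (p := p)).val = Am p := IsUnit.unit_spec _
lemma uB_val : (uB (p := p)).val = Bm p := IsUnit.unit_spec _

noncomputable def uA3 : (Matrix (Fin 3) (Fin 3) R)ˣ := uA ^ 3
noncomputable def uB3 : (Matrix (Fin 3) (Fin 3) R)ˣ := uB ^ 3

noncomputable instance act : MulAction ((Matrix (Fin 3) (Fin 3) R)ˣ) (Fin 3 → R) where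
  smul u v := u.val.mulVec v
  one_smul v := by
    show (1 : (Matrix (Fin 3) (Fin 3) R)ˣ).val.mulVec v = v
    rw [Units.val_one, Matrix.one_mulVec]
  mul_smul u w v := by
    show (u * w).val.mulVec v = u.val.mulVec (w.val.mulVec v)
    rw [Units.val_mul, Matrix.mulVec_mulVec]

lemma smul_def (u : (Matrix (Fin 3) (Fin 3) R)ˣ) (v : Fin 3 → R) : u • v = u.val.mulVec v := rfl

lemma uA3_smul (v : Fin 3 → R) :
    uA3 (p := p) • v = (Am p).mulVec ((Am p).mulVec ((Am p).mulVec v)) := by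
  rw [smul_def, uA3, Units.val_pow_eq_pow_val, uA_val, pow_succ, pow_succ, pow_one,
    ← Matrix.mulVec_mulVec, ← Matrix.mulVec_mulVec]

lemma uB3_smul (v : Fin 3 → R) :
    uB3 (p := p) • v = (Bm p).mulVec ((Bm p).mulVec ((Bm p).mulVec v)) := by
  rw [smul_def, uB3, Units.val_pow_eq_pow_val, uB_val, pow_succ, pow_succ, pow_one,
    ← Matrix.mulVec_mulVec, ← Matrix.mulVec_mulVec]

lemma aA_uA3 (v : Fin 3 → R) : aA (uA3 (p := p) • v) = aA v := by
  rw [uA3_smul, eigA1, eigA1, eigA1]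

lemma aB_uB3 (v : Fin 3 → R) : aB (uB3 (p := p) • v) = aB v := by
  rw [uB3_smul, eigB1, eigB1, eigB1]

lemma wb_reassoc (a b : ℤ) (x : WithBot ℤ) :
    (a : WithBot ℤ) + ((b : WithBot ℤ) + x) = ((a + b : ℤ) : WithBot ℤ) + x := by
  rw [← add_assoc, ← WithBot.coe_add]

lemma wb_unshift {k : ℤ} {X Y : WithBot ℤ} (h : (k : WithBot ℤ) + X = Y) :
    X = ((-k : ℤ) : WithBot ℤ) + Y := by
  subst h
  cases X with
  | bot => simp
  | coe m => exact_mod_cast (by omega : m = -k + (k + m))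

lemma deg_bA_uA3 (v : Fin 3 → R) :
    (bA (uA3 (p := p) • v)).degree = ((3:ℤ) : WithBot ℤ) + (bA v).degree := by
  have h : bA (uA3 (p := p) • v) = -(T 1 * (T 1 * (T 1 * bA v))) := by
    rw [uA3_smul, eigA2, eigA2, eigA2]; ring
  rw [h, deg_neg, deg_T_mul, deg_T_mul, deg_T_mul, wb_reassoc, wb_reassoc]
  norm_num

lemma deg_cA_uA3 (v : Fin 3 → R) :
    (cA (uA3 (p := p) • v)).degree = ((-3:ℤ) : WithBot ℤ) + (cA v).degree := by
  have h : cA (uA3 (p := p) • v) = -(T (-1) * (T (-1) * (T (-1) * cA v))) := by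
    rw [uA3_smul, eigA3, eigA3, eigA3]; ring
  rw [h, deg_neg, deg_T_mul, deg_T_mul, deg_T_mul, wb_reassoc, wb_reassoc]
  norm_num

lemma deg_bB_uB3 (v : Fin 3 → R) :
    (bB (uB3 (p := p) • v)).degree = ((3:ℤ) : WithBot ℤ) + (bB v).degree := by
  have h : bB (uB3 (p := p) • v) = -(T 1 * (T 1 * (T 1 * bB v))) := by
    rw [uB3_smul, eigB2, eigB2, eigB2]; ring
  rw [h, deg_neg, deg_T_mul, deg_T_mul, deg_T_mul, wb_reassoc, wb_reassoc]
  norm_num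

lemma deg_cB_uB3 (v : Fin 3 → R) :
    (cB (uB3 (p := p) • v)).degree = ((-3:ℤ) : WithBot ℤ) + (cB v).degree := by
  have h : cB (uB3 (p := p) • v) = -(T (-1) * (T (-1) * (T (-1) * cB v))) := by
    rw [uB3_smul, eigB3, eigB3, eigB3]; ring
  rw [h, deg_neg, deg_T_mul, deg_T_mul, deg_T_mul, wb_reassoc, wb_reassoc]
  norm_num

section ZPow

lemma aA_zpow (n : ℤ) (v : Fin 3 → R) : aA ((uA3 (p := p) ^ n) • v) = aA v := by
  induction n using Int.induction_on generalizing v with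
  | zero => rw [zpow_zero, one_smul]
  | succ n ih => rw [zpow_add_one, mul_smul, ih, aA_uA3]
  | pred n ih =>
      rw [zpow_sub_one, mul_smul, ih]
      have := aA_uA3 (p := p) ((uA3 (p := p))⁻¹ • v)
      rw [smul_inv_smul] at this
      exact this.symm

lemma aB_zpow (n : ℤ) (v : Fin 3 → R) : aB ((uB3 (p := p) ^ n) • v) = aB v := by
  induction n using Int.induction_on generalizing v with
  | zero => rw [zpow_zero, one_smul]
  | succ n ih => rw [zpow_add_one, mul_smul, ih, aB_uB3]
  | pred n ih =>
      rw [zpow_sub_one, mul_smul, ih]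
      have := aB_uB3 (p := p) ((uB3 (p := p))⁻¹ • v)
      rw [smul_inv_smul] at this
      exact this.symm



lemma deg_smul_inv {u : (Matrix (Fin 3) (Fin 3) R)ˣ} {φ : (Fin 3 → R) → LaurentPolynomial (ZMod p)}
    {k : ℤ} (hstep : ∀ w, (φ (u • w)).degree = (k : WithBot ℤ) + (φ w).degree)
    (v : Fin 3 → R) : (φ (u⁻¹ • v)).degree = ((-k : ℤ) : WithBot ℤ) + (φ v).degree := by
  have h := hstep (u⁻¹ • v)
  rw [smul_inv_smul] at h
  exact wb_unshift h.symm

lemma deg_zpow_gen {u : (Matrix (Fin 3) (Fin 3) R)ˣ} {φ : (Fin 3 → R) → LaurentPolynomial (ZMod p)}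
    {k : ℤ} (hstep : ∀ w, (φ (u • w)).degree = (k : WithBot ℤ) + (φ w).degree)
    (n : ℤ) (v : Fin 3 → R) :
    (φ ((u ^ n) • v)).degree = ((k * n : ℤ) : WithBot ℤ) + (φ v).degree := by
  induction n using Int.induction_on generalizing v with
  | zero => rw [zpow_zero, one_smul]; norm_num
  | succ n ih =>
      rw [zpow_add_one, mul_smul, ih, hstep, wb_reassoc]
      congr 2
      ring
  | pred n ih =>
      rw [zpow_sub_one, mul_smul, ih, deg_smul_inv hstep, wb_reassoc]
      congr 2
      ring

lemma deg_bA_zpow (n : ℤ) (v : Fin 3 → R) :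
    (bA ((uA3 (p := p) ^ n) • v)).degree = ((3 * n : ℤ) : WithBot ℤ) + (bA v).degree :=
  deg_zpow_gen (fun w => deg_bA_uA3 w) n v

lemma deg_cA_zpow (n : ℤ) (v : Fin 3 → R) :
    (cA ((uA3 (p := p) ^ n) • v)).degree = ((-3 * n : ℤ) : WithBot ℤ) + (cA v).degree :=
  deg_zpow_gen (fun w => deg_cA_uA3 w) n v

lemma deg_bB_zpow (n : ℤ) (v : Fin 3 → R) :
    (bB ((uB3 (p := p) ^ n) • v)).degree = ((3 * n : ℤ) : WithBot ℤ) + (bB v).degree :=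
  deg_zpow_gen (fun w => deg_bB_uB3 w) n v

lemma deg_cB_zpow (n : ℤ) (v : Fin 3 → R) :
    (cB ((uB3 (p := p) ^ n) • v)).degree = ((-3 * n : ℤ) : WithBot ℤ) + (cB v).degree :=
  deg_zpow_gen (fun w => deg_cB_uB3 w) n v

end ZPow

/-! ### The ping-pong sets -/

variable [Fact (1 < p)]

def XA : Set (Fin 3 → R) := {v |
  ((bA v).degree ≠ ⊥ ∧ (aA v).degree + (3:ℤ) ≤ (bA v).degree ∧
    (cA v).degree + (3:ℤ) ≤ (bA v).degree) ∨
  ((cA v).degree ≠ ⊥ ∧ (aA v).degree + (3:ℤ) ≤ (cA v).degree ∧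
    (bA v).degree + (3:ℤ) ≤ (cA v).degree)}

def XB : Set (Fin 3 → R) := {v |
  ((bB v).degree ≠ ⊥ ∧ (aB v).degree + (3:ℤ) ≤ (bB v).degree ∧
    (cB v).degree + (3:ℤ) ≤ (bB v).degree) ∨
  ((cB v).degree ≠ ⊥ ∧ (aB v).degree + (3:ℤ) ≤ (cB v).degree ∧
    (bB v).degree + (3:ℤ) ≤ (cB v).degree)}

lemma mem_XA {v : Fin 3 → R} : v ∈ XA (p := p) ↔
  (((bA v).degree ≠ ⊥ ∧ (aA v).degree + (3:ℤ) ≤ (bA v).degree ∧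
    (cA v).degree + (3:ℤ) ≤ (bA v).degree) ∨
  ((cA v).degree ≠ ⊥ ∧ (aA v).degree + (3:ℤ) ≤ (cA v).degree ∧
    (bA v).degree + (3:ℤ) ≤ (cA v).degree)) := Iff.rfl

lemma mem_XB {v : Fin 3 → R} : v ∈ XB (p := p) ↔
  (((bB v).degree ≠ ⊥ ∧ (aB v).degree + (3:ℤ) ≤ (bB v).degree ∧
    (cB v).degree + (3:ℤ) ≤ (bB v).degree) ∨
  ((cB v).degree ≠ ⊥ ∧ (aB v).degree + (3:ℤ) ≤ (cB v).degree ∧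
    (bB v).degree + (3:ℤ) ≤ (cB v).degree)) := Iff.rfl

lemma wb_le3 {a b : ℤ} (h : a + 3 ≤ b) : (a : WithBot ℤ) + (3:ℤ) ≤ (b : WithBot ℤ) := by
  exact_mod_cast h

/-- Balance: a vector in `XB` has `A`-coordinates of degrees `(d-1, d, d-1)` or `(d-1, d-1, d)`. -/
lemma balB {v : Fin 3 → R} (hv : v ∈ XB) :
    ∃ d : ℤ, ((aA v).degree = ((d-1:ℤ) : WithBot ℤ) ∧ (bA v).degree = (d : WithBot ℤ) ∧
        (cA v).degree = ((d-1:ℤ) : WithBot ℤ)) ∨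
      ((aA v).degree = ((d-1:ℤ) : WithBot ℤ) ∧ (bA v).degree = ((d-1:ℤ) : WithBot ℤ) ∧
        (cA v).degree = (d : WithBot ℤ)) := by
  rw [mem_XB] at hv
  rcases hv with ⟨h0, h1, h2⟩ | ⟨h0, h1, h2⟩
  · obtain ⟨d, hd⟩ := WithBot.ne_bot_iff_exists.mp h0
    exact ⟨d, Or.inl (balanceB_b hd.symm (hd ▸ h1) (hd ▸ h2))⟩
  · obtain ⟨d, hd⟩ := WithBot.ne_bot_iff_exists.mp h0
    exact ⟨d, Or.inr (balanceB_c hd.symm (hd ▸ h1) (hd ▸ h2))⟩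

lemma balA {v : Fin 3 → R} (hv : v ∈ XA) :
    ∃ d : ℤ, ((aB v).degree = ((d-1:ℤ) : WithBot ℤ) ∧ (bB v).degree = (d : WithBot ℤ) ∧
        (cB v).degree = ((d-1:ℤ) : WithBot ℤ)) ∨
      ((aB v).degree = ((d-1:ℤ) : WithBot ℤ) ∧ (bB v).degree = ((d-1:ℤ) : WithBot ℤ) ∧
        (cB v).degree = (d : WithBot ℤ)) := by
  rw [mem_XA] at hv
  rcases hv with ⟨h0, h1, h2⟩ | ⟨h0, h1, h2⟩
  · obtain ⟨d, hd⟩ := WithBot.ne_bot_iff_exists.mp h0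
    exact ⟨d, Or.inr (balanceA_b hd.symm (hd ▸ h1) (hd ▸ h2))⟩
  · obtain ⟨d, hd⟩ := WithBot.ne_bot_iff_exists.mp h0
    exact ⟨d, Or.inl (balanceA_c hd.symm (hd ▸ h1) (hd ▸ h2))⟩

lemma ping_a {n : ℤ} (hn : n ≠ 0) {v : Fin 3 → R} (hv : v ∈ XB) :
    (uA3 (p := p) ^ n) • v ∈ XA := by
  obtain ⟨d, hpat⟩ := balB hv
  have haz := aA_zpow (p := p) n v
  have hbz := deg_bA_zpow (p := p) n v
  have hcz := deg_cA_zpow (p := p) n v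
  rcases hpat with ⟨e1, e2, e3⟩ | ⟨e1, e2, e3⟩ <;>
    rw [e2, ← WithBot.coe_add] at hbz <;>
    rw [e3, ← WithBot.coe_add] at hcz <;>
    rcases lt_or_gt_of_ne hn with hneg | hpos
  · right
    rw [haz, hbz, hcz, e1]
    exact ⟨WithBot.coe_ne_bot, wb_le3 (by omega), wb_le3 (by omega)⟩
  · left
    rw [haz, hbz, hcz, e1]
    exact ⟨WithBot.coe_ne_bot, wb_le3 (by omega), wb_le3 (by omega)⟩
  · right
    rw [haz, hbz, hcz, e1]
    exact ⟨WithBot.coe_ne_bot, wb_le3 (by omega), wb_le3 (by omega)⟩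
  · left
    rw [haz, hbz, hcz, e1]
    exact ⟨WithBot.coe_ne_bot, wb_le3 (by omega), wb_le3 (by omega)⟩

lemma ping_b {n : ℤ} (hn : n ≠ 0) {v : Fin 3 → R} (hv : v ∈ XA) :
    (uB3 (p := p) ^ n) • v ∈ XB := by
  obtain ⟨d, hpat⟩ := balA hv
  have haz := aB_zpow (p := p) n v
  have hbz := deg_bB_zpow (p := p) n v
  have hcz := deg_cB_zpow (p := p) n v
  rcases hpat with ⟨e1, e2, e3⟩ | ⟨e1, e2, e3⟩ <;>
    rw [e2, ← WithBot.coe_add] at hbz <;>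
    rw [e3, ← WithBot.coe_add] at hcz <;>
    rcases lt_or_gt_of_ne hn with hneg | hpos
  · right
    rw [haz, hbz, hcz, e1]
    exact ⟨WithBot.coe_ne_bot, wb_le3 (by omega), wb_le3 (by omega)⟩
  · left
    rw [haz, hbz, hcz, e1]
    exact ⟨WithBot.coe_ne_bot, wb_le3 (by omega), wb_le3 (by omega)⟩
  · right
    rw [haz, hbz, hcz, e1]
    exact ⟨WithBot.coe_ne_bot, wb_le3 (by omega), wb_le3 (by omega)⟩
  · left
    rw [haz, hbz, hcz, e1]
    exact ⟨WithBot.coe_ne_bot, wb_le3 (by omega), wb_le3 (by omega)⟩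

lemma wb_not3 {a b : ℤ} (hab : a + 3 > b) : ¬ ((a : WithBot ℤ) + (3:ℤ) ≤ (b : WithBot ℤ)) := by
  intro h
  have : a + 3 ≤ b := by exact_mod_cast h
  omega

lemma XA_XB_disj : Disjoint (XA (p := p)) XB := by
  rw [Set.disjoint_left]
  intro v hvA hvB
  rw [mem_XA] at hvA
  obtain ⟨d, hpat⟩ := balB hvB
  rcases hpat with ⟨e1, e2, e3⟩ | ⟨e1, e2, e3⟩ <;>
    rcases hvA with ⟨h0, h1, h2⟩ | ⟨h0, h1, h2⟩
  · exact wb_not3 (by omega) (e1 ▸ e2 ▸ h1)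
  · exact wb_not3 (by omega) (e2 ▸ e3 ▸ h2)
  · exact wb_not3 (by omega) (e3 ▸ e2 ▸ h2)
  · exact wb_not3 (by omega) (e1 ▸ e3 ▸ h1)

lemma XA_nonempty : (XA (p := p)).Nonempty := by
  refine ⟨![0, 1, 0], mem_XA.mpr (Or.inl ?_)⟩
  have hb : bA (p := p) ![0, 1, 0] = -(1 + T 1) := by
    simp [bA]
  have ha : aA (p := p) ![0, 1, 0] = 0 := by simp [aA]
  have hc : cA (p := p) ![0, 1, 0] = 0 := by simp [cA]
  have hdb : (bA (p := p) ![0, 1, 0]).degree = ((1:ℤ) : WithBot ℤ) := by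
    rw [hb, deg_neg]
    have : (1 + T 1 : R) = (1 + T 1) * 1 := by ring
    rw [this, deg_one_add_T_mul]
    have : ((1:R)).degree = (0 : WithBot ℤ) := by
      have : (1 : R) = LaurentPolynomial.C 1 := by simp
      rw [this, LaurentPolynomial.degree_C one_ne_zero]
    rw [this]
    exact_mod_cast rfl
  refine ⟨by rw [hdb]; exact WithBot.coe_ne_bot, ?_, ?_⟩ <;>
    simp [ha, hc, hdb]

lemma XB_nonempty : (XB (p := p)).Nonempty := by
  refine ⟨![0, 0, 1], mem_XB.mpr (Or.inl ?_)⟩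
  have hb : bB (p := p) ![0, 0, 1] = 1 + T 1 := by
    simp [bB]
  have ha : aB (p := p) ![0, 0, 1] = 0 := by simp [aB]
  have hc : cB (p := p) ![0, 0, 1] = 0 := by simp [cB]
  have hdb : (bB (p := p) ![0, 0, 1]).degree = ((1:ℤ) : WithBot ℤ) := by
    rw [hb]
    have : (1 + T 1 : R) = (1 + T 1) * 1 := by ring
    rw [this, deg_one_add_T_mul]
    have : ((1:R)).degree = (0 : WithBot ℤ) := by
      have : (1 : R) = LaurentPolynomial.C 1 := by simp
      rw [this, LaurentPolynomial.degree_C one_ne_zero]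
    rw [this]
    exact_mod_cast rfl
  refine ⟨by rw [hdb]; exact WithBot.coe_ne_bot, ?_, ?_⟩ <;>
    simp [ha, hc, hdb]

/-! ### The ping-pong argument -/

noncomputable def gen (i : Bool) : (Matrix (Fin 3) (Fin 3) R)ˣ := if i then uA3 else uB3

lemma gen_val (i : Bool) :
    (gen (p := p) i).val = if i then Am p ^ 3 else Bm p ^ 3 := by
  cases i <;> simp [gen, uA3, uB3, Units.val_pow_eq_pow_val, uA_val, uB_val]

def Xset (i : Bool) : Set (Fin 3 → R) := if i then XA else XB

theorem lift_inj : Function.Injective (FreeGroup.lift (gen (p := p))) := by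
  have heq : FreeGroup.lift (gen (p := p)) =
      (Monoid.CoprodI.lift fun i : Bool =>
          FreeGroup.lift fun _ : Unit => gen (p := p) i).comp
        (freeGroupEquivCoprodI (ι := Bool)).toMonoidHom := by
    ext i
    simp
  rw [heq, MonoidHom.coe_comp]
  refine Function.Injective.comp ?_ (MulEquiv.injective _)
  apply Monoid.CoprodI.lift_injective_of_ping_pong _ _ (Xset (p := p))
  · intro i
    cases i
    · exact XB_nonempty
    · exact XA_nonempty
  · intro i j hij
    cases i <;> cases j <;> simp_all [Function.onFun, Xset]
    · exact XA_XB_disj.symm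
    · exact XA_XB_disj
  · intro i j hij
    refine FreeGroup.freeGroupUnitEquivInt.forall_congr_left.mpr ?_
    intro n hne1
    change FreeGroup.lift (fun _ => gen (p := p) i) (FreeGroup.of () ^ n) • Xset (p := p) j ⊆ Xset (p := p) i
    simp only [map_zpow, FreeGroup.lift_apply_of]
    have hn0 : n ≠ 0 := by
      rintro rfl
      exact hne1 (by simp [FreeGroup.freeGroupUnitEquivInt])
    rintro x ⟨y, hy, rfl⟩
    cases i <;> cases j <;> try exact absurd rfl hij
    · exact ping_b hn0 hy
    · exact ping_a hn0 hy
  · right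
    use true
    rw [FreeGroup.freeGroupUnitEquivInt.cardinal_eq, Cardinal.mk_denumerable]
    exact (Cardinal.nat_lt_aleph0 3).le

end A3B3

open A3B3 in
/-- A³ and B³ generate a free group of rank 2 over (ℤ/pℤ)[t,t⁻¹]: for every
nontrivial element of the free group on two generators, the corresponding
reduced word in A³, B³ and their inverses is not the identity matrix. -/
theorem A3_B3_free (p : ℕ) [Fact (1 < p)] (w : FreeGroup Bool) (hw : w ≠ 1) :
    (w.toWord.map (fun x =>
        (if x.1 then Am p ^ 3 else Bm p ^ 3) ^ (if x.2 then (1 : ℤ) else -1))).prod ≠ 1 := by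
  intro hone
  apply hw
  have key : (w.toWord.map (fun x =>
        (if x.1 then Am p ^ 3 else Bm p ^ 3) ^ (if x.2 then (1 : ℤ) else -1))).prod
      = ((FreeGroup.lift (gen (p := p)) w : (Matrix (Fin 3) (Fin 3) (LaurentPolynomial (ZMod p)))ˣ) :
          Matrix (Fin 3) (Fin 3) (LaurentPolynomial (ZMod p))) := by
    conv_rhs => rw [← FreeGroup.mk_toWord (x := w)]
    rw [FreeGroup.lift_mk, ← Units.coeHom_apply, map_list_prod, List.map_map]
    congr 1
    refine List.map_congr_left fun x _ => ?_
    rcases x with ⟨i, s⟩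
    cases s
    · simp only [cond_false, Function.comp_apply, Units.coeHom_apply, Matrix.coe_units_inv,
        gen_val, if_false]
      exact Matrix.zpow_neg_one _
    · simp only [cond_true, Function.comp_apply, Units.coeHom_apply, gen_val, if_true]
      exact zpow_one _
  rw [key] at hone
  have : FreeGroup.lift (gen (p := p)) w = 1 := Units.ext (hone.trans Units.val_one.symm)
  exact lift_inj (by rw [this, map_one])
end
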